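/- In the free SMI category M, if no propositional letter occurs in A and B, then any two arrows f, g : A → B are equal. -/

import Mathlib

namespace SMI

/-- Objects of the free symmetric bimonoidal intermuting category 𝓜 :
propositional formulas over an infinite set of letters (indexed by ℕ),
the constants ⊥ and ⊤, and the connectives ∨ and ∧. -/
inductive Frm : Type
  | pl : ℕ → Frm
  | bot : Frm
  | top : Frm
  | or : Frm → Frm → Frm
  | and : Frm → Frm → Frm
  deriving DecidableEq

/-- Arrow terms of 𝓜 , generated from the primitive arrow terms
(associativity b, symmetry c, unit isomorphisms δ and σ, intermutation cᵏ,
the w-arrows and κ) by composition, ∨ and ∧.  The suffixes `To`/`From`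
record the direction (`→`/`←`) of the corresponding isomorphism. -/
inductive Tm : Frm → Frm → Type
  | id (A : Frm) : Tm A A
  | comp {A B C : Frm} : Tm B C → Tm A B → Tm A C
  | orM {A B C D : Frm} : Tm A B → Tm C D → Tm (A.or C) (B.or D)
  | andM {A B C D : Frm} : Tm A B → Tm C D → Tm (A.and C) (B.and D)
  | bOrTo (A B C : Frm) : Tm (A.or (B.or C)) ((A.or B).or C)
  | bOrFrom (A B C : Frm) : Tm ((A.or B).or C) (A.or (B.or C))
  | bAndTo (A B C : Frm) : Tm (A.and (B.and C)) ((A.and B).and C)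
  | bAndFrom (A B C : Frm) : Tm ((A.and B).and C) (A.and (B.and C))
  | cOr (A B : Frm) : Tm (A.or B) (B.or A)
  | cAnd (A B : Frm) : Tm (A.and B) (B.and A)
  | dOrTo (A : Frm) : Tm (A.or Frm.bot) A
  | dOrFrom (A : Frm) : Tm A (A.or Frm.bot)
  | sOrTo (A : Frm) : Tm (Frm.bot.or A) A
  | sOrFrom (A : Frm) : Tm A (Frm.bot.or A)
  | dAndTo (A : Frm) : Tm (A.and Frm.top) A
  | dAndFrom (A : Frm) : Tm A (A.and Frm.top)
  | sAndTo (A : Frm) : Tm (Frm.top.and A) A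
  | sAndFrom (A : Frm) : Tm A (Frm.top.and A)
  | ck (A B C D : Frm) : Tm ((A.and B).or (C.and D)) ((A.or C).and (B.or D))
  | wAndTo : Tm (Frm.bot.and Frm.bot) Frm.bot
  | wAndFrom : Tm Frm.bot (Frm.bot.and Frm.bot)
  | wOrTo : Tm (Frm.top.or Frm.top) Frm.top
  | wOrFrom : Tm Frm.top (Frm.top.or Frm.top)
  | kappa : Tm Frm.bot Frm.top

/-- The equality of arrows of the free SMI category 𝓜 : the smallest
congruence (with respect to ∘, ∨, ∧) containing the equations of the two
symmetric monoidal structures, the naturality and isomorphism conditions,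
and the thirteen coherence diagrams (1)-(13) of an SMI category. -/
inductive MEq : ∀ {A B : Frm}, Tm A B → Tm A B → Prop
  -- equivalence
  | refl {A B : Frm} (f : Tm A B) : MEq f f
  | symm {A B : Frm} {f g : Tm A B} : MEq f g → MEq g f
  | trans {A B : Frm} {f g h : Tm A B} : MEq f g → MEq g h → MEq f h
  -- congruence
  | comp_congr {A B C : Frm} {g g' : Tm B C} {f f' : Tm A B} :
      MEq g g' → MEq f f' → MEq (g.comp f) (g'.comp f')
  | or_congr {A B C D : Frm} {f f' : Tm A B} {g g' : Tm C D} :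
      MEq f f' → MEq g g' → MEq (f.orM g) (f'.orM g')
  | and_congr {A B C D : Frm} {f f' : Tm A B} {g g' : Tm C D} :
      MEq f f' → MEq g g' → MEq (f.andM g) (f'.andM g')
  -- category
  | id_comp {A B : Frm} (f : Tm A B) : MEq ((Tm.id B).comp f) f
  | comp_id {A B : Frm} (f : Tm A B) : MEq (f.comp (Tm.id A)) f
  | comp_assoc {A B C D : Frm} (h : Tm C D) (g : Tm B C) (f : Tm A B) :
      MEq ((h.comp g).comp f) (h.comp (g.comp f))
  -- ∨ and ∧ are biendofunctors
  | or_id (A B : Frm) : MEq ((Tm.id A).orM (Tm.id B)) (Tm.id (A.or B))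
  | and_id (A B : Frm) : MEq ((Tm.id A).andM (Tm.id B)) (Tm.id (A.and B))
  | or_comp {A B C A' B' C' : Frm} (g : Tm B C) (f : Tm A B) (g' : Tm B' C') (f' : Tm A' B') :
      MEq ((g.comp f).orM (g'.comp f')) ((g.orM g').comp (f.orM f'))
  | and_comp {A B C A' B' C' : Frm} (g : Tm B C) (f : Tm A B) (g' : Tm B' C') (f' : Tm A' B') :
      MEq ((g.comp f).andM (g'.comp f')) ((g.andM g').comp (f.andM f'))
  -- naturality
  | bOr_nat {A A' B B' C C' : Frm} (f : Tm A A') (g : Tm B B') (h : Tm C C') :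
      MEq ((Tm.bOrTo A' B' C').comp (f.orM (g.orM h))) (((f.orM g).orM h).comp (Tm.bOrTo A B C))
  | bAnd_nat {A A' B B' C C' : Frm} (f : Tm A A') (g : Tm B B') (h : Tm C C') :
      MEq ((Tm.bAndTo A' B' C').comp (f.andM (g.andM h))) (((f.andM g).andM h).comp (Tm.bAndTo A B C))
  | cOr_nat {A A' B B' : Frm} (f : Tm A A') (g : Tm B B') :
      MEq ((Tm.cOr A' B').comp (f.orM g)) ((g.orM f).comp (Tm.cOr A B))
  | cAnd_nat {A A' B B' : Frm} (f : Tm A A') (g : Tm B B') :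
      MEq ((Tm.cAnd A' B').comp (f.andM g)) ((g.andM f).comp (Tm.cAnd A B))
  | dOr_nat {A A' : Frm} (f : Tm A A') :
      MEq ((Tm.dOrTo A').comp (f.orM (Tm.id Frm.bot))) (f.comp (Tm.dOrTo A))
  | sOr_nat {A A' : Frm} (f : Tm A A') :
      MEq ((Tm.sOrTo A').comp ((Tm.id Frm.bot).orM f)) (f.comp (Tm.sOrTo A))
  | dAnd_nat {A A' : Frm} (f : Tm A A') :
      MEq ((Tm.dAndTo A').comp (f.andM (Tm.id Frm.top))) (f.comp (Tm.dAndTo A))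
  | sAnd_nat {A A' : Frm} (f : Tm A A') :
      MEq ((Tm.sAndTo A').comp ((Tm.id Frm.top).andM f)) (f.comp (Tm.sAndTo A))
  | ck_nat {A A' B B' C C' D D' : Frm}
      (f : Tm A A') (g : Tm B B') (h : Tm C C') (k : Tm D D') :
      MEq ((Tm.ck A' B' C' D').comp ((f.andM g).orM (h.andM k)))
          (((f.orM h).andM (g.orM k)).comp (Tm.ck A B C D))
  -- the primitive arrows other than cᵏ and κ are isomorphisms
  | bOr_iso1 (A B C : Frm) : MEq ((Tm.bOrTo A B C).comp (Tm.bOrFrom A B C)) (Tm.id _)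
  | bOr_iso2 (A B C : Frm) : MEq ((Tm.bOrFrom A B C).comp (Tm.bOrTo A B C)) (Tm.id _)
  | bAnd_iso1 (A B C : Frm) : MEq ((Tm.bAndTo A B C).comp (Tm.bAndFrom A B C)) (Tm.id _)
  | bAnd_iso2 (A B C : Frm) : MEq ((Tm.bAndFrom A B C).comp (Tm.bAndTo A B C)) (Tm.id _)
  | dOr_iso1 (A : Frm) : MEq ((Tm.dOrTo A).comp (Tm.dOrFrom A)) (Tm.id _)
  | dOr_iso2 (A : Frm) : MEq ((Tm.dOrFrom A).comp (Tm.dOrTo A)) (Tm.id _)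
  | sOr_iso1 (A : Frm) : MEq ((Tm.sOrTo A).comp (Tm.sOrFrom A)) (Tm.id _)
  | sOr_iso2 (A : Frm) : MEq ((Tm.sOrFrom A).comp (Tm.sOrTo A)) (Tm.id _)
  | dAnd_iso1 (A : Frm) : MEq ((Tm.dAndTo A).comp (Tm.dAndFrom A)) (Tm.id _)
  | dAnd_iso2 (A : Frm) : MEq ((Tm.dAndFrom A).comp (Tm.dAndTo A)) (Tm.id _)
  | sAnd_iso1 (A : Frm) : MEq ((Tm.sAndTo A).comp (Tm.sAndFrom A)) (Tm.id _)
  | sAnd_iso2 (A : Frm) : MEq ((Tm.sAndFrom A).comp (Tm.sAndTo A)) (Tm.id _)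
  | wOr_iso1 : MEq (Tm.wOrTo.comp Tm.wOrFrom) (Tm.id _)
  | wOr_iso2 : MEq (Tm.wOrFrom.comp Tm.wOrTo) (Tm.id _)
  | wAnd_iso1 : MEq (Tm.wAndTo.comp Tm.wAndFrom) (Tm.id _)
  | wAnd_iso2 : MEq (Tm.wAndFrom.comp Tm.wAndTo) (Tm.id _)
  | cOr_inv (A B : Frm) : MEq ((Tm.cOr B A).comp (Tm.cOr A B)) (Tm.id _)
  | cAnd_inv (A B : Frm) : MEq ((Tm.cAnd B A).comp (Tm.cAnd A B)) (Tm.id _)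
  -- Mac Lane coherence for the two symmetric monoidal structures
  | pentagonOr (A B C D : Frm) :
      MEq ((Tm.bOrTo (A.or B) C D).comp (Tm.bOrTo A B (C.or D)))
          (((Tm.bOrTo A B C).orM (Tm.id D)).comp
            ((Tm.bOrTo A (B.or C) D).comp ((Tm.id A).orM (Tm.bOrTo B C D))))
  | pentagonAnd (A B C D : Frm) :
      MEq ((Tm.bAndTo (A.and B) C D).comp (Tm.bAndTo A B (C.and D)))
          (((Tm.bAndTo A B C).andM (Tm.id D)).comp
            ((Tm.bAndTo A (B.and C) D).comp ((Tm.id A).andM (Tm.bAndTo B C D))))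
  | triangleOr (A B : Frm) :
      MEq (((Tm.dOrTo A).orM (Tm.id B)).comp (Tm.bOrTo A Frm.bot B))
          ((Tm.id A).orM (Tm.sOrTo B))
  | triangleAnd (A B : Frm) :
      MEq (((Tm.dAndTo A).andM (Tm.id B)).comp (Tm.bAndTo A Frm.top B))
          ((Tm.id A).andM (Tm.sAndTo B))
  | hexagonOr (A B C : Frm) :
      MEq ((Tm.bOrTo C A B).comp ((Tm.cOr (A.or B) C).comp (Tm.bOrTo A B C)))
          (((Tm.cOr A C).orM (Tm.id B)).comp
            ((Tm.bOrTo A C B).comp ((Tm.id A).orM (Tm.cOr B C))))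
  | hexagonAnd (A B C : Frm) :
      MEq ((Tm.bAndTo C A B).comp ((Tm.cAnd (A.and B) C).comp (Tm.bAndTo A B C)))
          (((Tm.cAnd A C).andM (Tm.id B)).comp
            ((Tm.bAndTo A C B).comp ((Tm.id A).andM (Tm.cAnd B C))))
  | sigmaOr_c (A : Frm) : MEq (Tm.sOrTo A) ((Tm.dOrTo A).comp (Tm.cOr Frm.bot A))
  | sigmaAnd_c (A : Frm) : MEq (Tm.sAndTo A) ((Tm.dAndTo A).comp (Tm.cAnd Frm.top A))
  -- the thirteen SMI diagrams
  | diag1 (A B C D E F : Frm) :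
      MEq ((Tm.bAndTo (A.or D) (B.or E) (C.or F)).comp
            (((Tm.id (A.or D)).andM (Tm.ck B C E F)).comp (Tm.ck A (B.and C) D (E.and F))))
          (((Tm.ck A B D E).andM (Tm.id (C.or F))).comp
            ((Tm.ck (A.and B) C (D.and E) F).comp ((Tm.bAndTo A B C).orM (Tm.bAndTo D E F))))
  | diag2 (A B C D E F : Frm) :
      MEq (((Tm.bOrTo A B C).andM (Tm.bOrTo D E F)).comp
            ((Tm.ck A D (B.or C) (E.or F)).comp ((Tm.id (A.and D)).orM (Tm.ck B E C F))))
          ((Tm.ck (A.or B) (D.or E) C F).comp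
            (((Tm.ck A D B E).orM (Tm.id (C.and F))).comp
              (Tm.bOrTo (A.and D) (B.and E) (C.and F))))
  | diag3 (A B C D : Frm) :
      MEq ((Tm.cAnd (A.or C) (B.or D)).comp (Tm.ck A B C D))
          ((Tm.ck B A D C).comp ((Tm.cAnd A B).orM (Tm.cAnd C D)))
  | diag4 (A B C D : Frm) :
      MEq ((Tm.ck B D A C).comp (Tm.cOr (A.and C) (B.and D)))
          (((Tm.cOr A B).andM (Tm.cOr C D)).comp (Tm.ck A C B D))
  | diag5 (A B : Frm) :
      MEq (Tm.ck A B Frm.bot Frm.bot)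
          (((Tm.dOrFrom A).andM (Tm.dOrFrom B)).comp
            ((Tm.dOrTo (A.and B)).comp ((Tm.id (A.and B)).orM Tm.wAndTo)))
  | diag6 (A B : Frm) :
      MEq (Tm.ck A Frm.top B Frm.top)
          (((Tm.id (A.or B)).andM Tm.wOrFrom).comp
            ((Tm.dAndFrom (A.or B)).comp ((Tm.dAndTo A).orM (Tm.dAndTo B))))
  | diag7 :
      MEq (Tm.bOrTo Frm.top Frm.top Frm.top)
          ((Tm.wOrFrom.orM (Tm.id Frm.top)).comp ((Tm.id Frm.top).orM Tm.wOrTo))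
  | diag8 :
      MEq (Tm.bAndTo Frm.bot Frm.bot Frm.bot)
          ((Tm.wAndFrom.andM (Tm.id Frm.bot)).comp ((Tm.id Frm.bot).andM Tm.wAndTo))
  | diag9 :
      MEq ((Tm.id Frm.top).orM Tm.kappa) (Tm.wOrFrom.comp (Tm.dOrTo Frm.top))
  | diag10 :
      MEq ((Tm.id Frm.bot).andM Tm.kappa) ((Tm.dAndFrom Frm.bot).comp Tm.wAndTo)
  | diag11 :
      MEq (Tm.ck Frm.top Frm.bot Frm.bot Frm.top)
          (((Tm.dOrFrom Frm.top).andM (Tm.sOrFrom Frm.top)).comp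
            ((Tm.dAndFrom Frm.top).comp
              (Tm.kappa.comp
                ((Tm.dOrTo Frm.bot).comp ((Tm.sAndTo Frm.bot).orM (Tm.dAndTo Frm.bot))))))
  | diag12 : MEq (Tm.cOr Frm.top Frm.top) (Tm.wOrFrom.comp Tm.wOrTo)
  | diag13 : MEq (Tm.cAnd Frm.bot Frm.bot) (Tm.wAndFrom.comp Tm.wAndTo)

end SMI

namespace SMI

/-- No propositional letter occurs in the formula. -/
def NoLtr : Frm → Prop
  | Frm.pl _ => False
  | Frm.bot => True
  | Frm.top => True
  | Frm.or A B => NoLtr A ∧ NoLtr B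
  | Frm.and A B => NoLtr A ∧ NoLtr B

/-!
Every letterless formula `A` is isomorphic to `⊥` or `⊤`, according to its truth value, by an
isomorphism `normalize A` assembled from the unit isomorphisms `δ`, `σ`, `ŵ⊥` and `w̌⊤`. For each
pair of truth values `a ≤ b` there is a canonical arrow between the corresponding constants, `𝟙`
or `κ`. By induction on an arrow term `f : A → B`, conjugating `f` by the normalizing
isomorphisms gives the canonical arrow, so `f` depends only on `A` and `B`. For each primitive
arrow the induction step is a finite check over truth values: for `b`, `c`, `δ` and `σ` it uses
Kelly's unit lemmas for the two monoidal structures and diagrams (7)–(10), (12), (13); for `cᵏ`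
the sixteen cases reduce, by the symmetries (3) and (4), to those given by diagrams (5), (6)
and (11).
-/

open CategoryTheory MonoidalCategory

instance Tm.setoid (A B : Frm) : Setoid (Tm A B) := ⟨MEq, ⟨.refl, .symm, .trans⟩⟩

instance : Category Frm where
  Hom A B := Quotient (Tm.setoid A B)
  id A := ⟦Tm.id A⟧
  comp f g := Quotient.map₂ (fun f g => Tm.comp g f) (fun _ _ hf _ _ hg => .comp_congr hg hf) f g
  id_comp f := Quotient.inductionOn f fun f => Quotient.sound (.comp_id f)
  comp_id f := Quotient.inductionOn f fun f => Quotient.sound (.id_comp f)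
  assoc f g h :=
    Quotient.inductionOn₃ f g h fun f g h => Quotient.sound (MEq.comp_assoc h g f).symm

open SMI.Frm (bot top)

def orHom {A B C D : Frm} (f : A ⟶ B) (g : C ⟶ D) : A.or C ⟶ B.or D :=
  Quotient.map₂ Tm.orM (fun _ _ hf _ _ hg => .or_congr hf hg) f g

def andHom {A B C D : Frm} (f : A ⟶ B) (g : C ⟶ D) : A.and C ⟶ B.and D :=
  Quotient.map₂ Tm.andM (fun _ _ hf _ _ hg => .and_congr hf hg) f g

infixr:70 " ∨ₘ " => orHom
infixr:70 " ∧ₘ " => andHom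

@[simp] theorem orHom_id (A B : Frm) : 𝟙 A ∨ₘ 𝟙 B = 𝟙 (A.or B) := Quotient.sound (.or_id A B)

@[simp] theorem andHom_id (A B : Frm) : 𝟙 A ∧ₘ 𝟙 B = 𝟙 (A.and B) := Quotient.sound (.and_id A B)

@[simp] theorem orHom_comp_orHom {A B C A' B' C' : Frm} (f : A ⟶ B) (f' : A' ⟶ B') (g : B ⟶ C)
    (g' : B' ⟶ C') : (f ∨ₘ f') ≫ (g ∨ₘ g') = (f ≫ g) ∨ₘ (f' ≫ g') := by
  induction f, g using Quotient.inductionOn₂; induction f', g' using Quotient.inductionOn₂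
  exact Quotient.sound (MEq.or_comp _ _ _ _).symm

@[simp] theorem andHom_comp_andHom {A B C A' B' C' : Frm} (f : A ⟶ B) (f' : A' ⟶ B') (g : B ⟶ C)
    (g' : B' ⟶ C') : (f ∧ₘ f') ≫ (g ∧ₘ g') = (f ≫ g) ∧ₘ (f' ≫ g') := by
  induction f, g using Quotient.inductionOn₂; induction f', g' using Quotient.inductionOn₂
  exact Quotient.sound (MEq.and_comp _ _ _ _).symm

theorem comp_orHom {A B C D E : Frm} (f : A ⟶ B) (g : B ⟶ C) (h : D ⟶ E) :
    (f ≫ g) ∨ₘ h = (f ∨ₘ h) ≫ (g ∨ₘ 𝟙 E) := by simp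

theorem orHom_comp {A B C D E : Frm} (f : D ⟶ E) (g : A ⟶ B) (h : B ⟶ C) :
    f ∨ₘ (g ≫ h) = (f ∨ₘ g) ≫ (𝟙 E ∨ₘ h) := by simp

theorem comp_andHom {A B C D E : Frm} (f : A ⟶ B) (g : B ⟶ C) (h : D ⟶ E) :
    (f ≫ g) ∧ₘ h = (f ∧ₘ h) ≫ (g ∧ₘ 𝟙 E) := by simp

theorem andHom_comp {A B C D E : Frm} (f : D ⟶ E) (g : A ⟶ B) (h : B ⟶ C) :
    f ∧ₘ (g ≫ h) = (f ∧ₘ g) ≫ (𝟙 E ∧ₘ h) := by simp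

@[simps]
def orIso {A B C D : Frm} (e : A ≅ B) (e' : C ≅ D) : A.or C ≅ B.or D where
  hom := e.hom ∨ₘ e'.hom
  inv := e.inv ∨ₘ e'.inv

@[simps]
def andIso {A B C D : Frm} (e : A ≅ B) (e' : C ≅ D) : A.and C ≅ B.and D where
  hom := e.hom ∧ₘ e'.hom
  inv := e.inv ∧ₘ e'.inv

/-! ## The primitive arrows and their equations -/

def bOr (A B C : Frm) : A.or (B.or C) ≅ (A.or B).or C :=
  ⟨⟦.bOrTo A B C⟧, ⟦.bOrFrom A B C⟧, Quotient.sound (.bOr_iso2 A B C),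
    Quotient.sound (.bOr_iso1 A B C)⟩

def bAnd (A B C : Frm) : A.and (B.and C) ≅ (A.and B).and C :=
  ⟨⟦.bAndTo A B C⟧, ⟦.bAndFrom A B C⟧, Quotient.sound (.bAnd_iso2 A B C),
    Quotient.sound (.bAnd_iso1 A B C)⟩

def cOr (A B : Frm) : A.or B ≅ B.or A :=
  ⟨⟦.cOr A B⟧, ⟦.cOr B A⟧, Quotient.sound (.cOr_inv A B), Quotient.sound (.cOr_inv B A)⟩

def cAnd (A B : Frm) : A.and B ≅ B.and A :=
  ⟨⟦.cAnd A B⟧, ⟦.cAnd B A⟧, Quotient.sound (.cAnd_inv A B), Quotient.sound (.cAnd_inv B A)⟩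

def dOr (A : Frm) : A.or bot ≅ A :=
  ⟨⟦.dOrTo A⟧, ⟦.dOrFrom A⟧, Quotient.sound (.dOr_iso2 A), Quotient.sound (.dOr_iso1 A)⟩

def sOr (A : Frm) : bot.or A ≅ A :=
  ⟨⟦.sOrTo A⟧, ⟦.sOrFrom A⟧, Quotient.sound (.sOr_iso2 A), Quotient.sound (.sOr_iso1 A)⟩

def dAnd (A : Frm) : A.and top ≅ A :=
  ⟨⟦.dAndTo A⟧, ⟦.dAndFrom A⟧, Quotient.sound (.dAnd_iso2 A), Quotient.sound (.dAnd_iso1 A)⟩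

def sAnd (A : Frm) : top.and A ≅ A :=
  ⟨⟦.sAndTo A⟧, ⟦.sAndFrom A⟧, Quotient.sound (.sAnd_iso2 A), Quotient.sound (.sAnd_iso1 A)⟩

def wAnd : bot.and bot ≅ bot :=
  ⟨⟦.wAndTo⟧, ⟦.wAndFrom⟧, Quotient.sound .wAnd_iso2, Quotient.sound .wAnd_iso1⟩

def wOr : top.or top ≅ top :=
  ⟨⟦.wOrTo⟧, ⟦.wOrFrom⟧, Quotient.sound .wOr_iso2, Quotient.sound .wOr_iso1⟩

def ck (A B C D : Frm) : (A.and B).or (C.and D) ⟶ (A.or C).and (B.or D) := ⟦.ck A B C D⟧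

def kappa : bot ⟶ top := ⟦.kappa⟧

theorem cOr_comp_cOr (A B : Frm) : (cOr A B).hom ≫ (cOr B A).hom = 𝟙 _ := (cOr A B).hom_inv_id

theorem cAnd_comp_cAnd (A B : Frm) : (cAnd A B).hom ≫ (cAnd B A).hom = 𝟙 _ :=
  (cAnd A B).hom_inv_id

theorem bOr_naturality {A A' B B' C C' : Frm} (f : A ⟶ A') (g : B ⟶ B') (h : C ⟶ C') :
    (f ∨ₘ g ∨ₘ h) ≫ (bOr A' B' C').hom = (bOr A B C).hom ≫ ((f ∨ₘ g) ∨ₘ h) :=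
  Quotient.inductionOn₃ f g h fun f g h => Quotient.sound (.bOr_nat f g h)

theorem bAnd_naturality {A A' B B' C C' : Frm} (f : A ⟶ A') (g : B ⟶ B') (h : C ⟶ C') :
    (f ∧ₘ g ∧ₘ h) ≫ (bAnd A' B' C').hom = (bAnd A B C).hom ≫ ((f ∧ₘ g) ∧ₘ h) :=
  Quotient.inductionOn₃ f g h fun f g h => Quotient.sound (.bAnd_nat f g h)

theorem cOr_naturality {A A' B B' : Frm} (f : A ⟶ A') (g : B ⟶ B') :
    (f ∨ₘ g) ≫ (cOr A' B').hom = (cOr A B).hom ≫ (g ∨ₘ f) :=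
  Quotient.inductionOn₂ f g fun f g => Quotient.sound (.cOr_nat f g)

theorem cAnd_naturality {A A' B B' : Frm} (f : A ⟶ A') (g : B ⟶ B') :
    (f ∧ₘ g) ≫ (cAnd A' B').hom = (cAnd A B).hom ≫ (g ∧ₘ f) :=
  Quotient.inductionOn₂ f g fun f g => Quotient.sound (.cAnd_nat f g)

theorem dOr_naturality {A A' : Frm} (f : A ⟶ A') :
    (f ∨ₘ 𝟙 bot) ≫ (dOr A').hom = (dOr A).hom ≫ f :=
  Quotient.inductionOn f fun f => Quotient.sound (.dOr_nat f)

theorem sOr_naturality {A A' : Frm} (f : A ⟶ A') :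
    (𝟙 bot ∨ₘ f) ≫ (sOr A').hom = (sOr A).hom ≫ f :=
  Quotient.inductionOn f fun f => Quotient.sound (.sOr_nat f)

theorem dAnd_naturality {A A' : Frm} (f : A ⟶ A') :
    (f ∧ₘ 𝟙 top) ≫ (dAnd A').hom = (dAnd A).hom ≫ f :=
  Quotient.inductionOn f fun f => Quotient.sound (.dAnd_nat f)

theorem sAnd_naturality {A A' : Frm} (f : A ⟶ A') :
    (𝟙 top ∧ₘ f) ≫ (sAnd A').hom = (sAnd A).hom ≫ f :=
  Quotient.inductionOn f fun f => Quotient.sound (.sAnd_nat f)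

theorem ck_naturality {A A' B B' C C' D D' : Frm}
    (f : A ⟶ A') (g : B ⟶ B') (h : C ⟶ C') (k : D ⟶ D') :
    ((f ∧ₘ g) ∨ₘ (h ∧ₘ k)) ≫ ck A' B' C' D' = ck A B C D ≫ ((f ∨ₘ h) ∧ₘ (g ∨ₘ k)) := by
  induction f, g using Quotient.inductionOn₂; induction h, k using Quotient.inductionOn₂
  exact Quotient.sound (.ck_nat _ _ _ _)

theorem pentagon_or (A B C D : Frm) :
    (bOr A B (C.or D)).hom ≫ (bOr (A.or B) C D).hom =
      (𝟙 A ∨ₘ (bOr B C D).hom) ≫ (bOr A (B.or C) D).hom ≫ ((bOr A B C).hom ∨ₘ 𝟙 D) := by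
  rw [← Category.assoc]; exact Quotient.sound (MEq.pentagonOr A B C D)

theorem pentagon_and (A B C D : Frm) :
    (bAnd A B (C.and D)).hom ≫ (bAnd (A.and B) C D).hom =
      (𝟙 A ∧ₘ (bAnd B C D).hom) ≫ (bAnd A (B.and C) D).hom ≫ ((bAnd A B C).hom ∧ₘ 𝟙 D) := by
  rw [← Category.assoc]; exact Quotient.sound (MEq.pentagonAnd A B C D)

theorem triangle_or (A B : Frm) :
    (bOr A bot B).hom ≫ ((dOr A).hom ∨ₘ 𝟙 B) = 𝟙 A ∨ₘ (sOr B).hom :=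
  Quotient.sound (.triangleOr A B)

theorem triangle_and (A B : Frm) :
    (bAnd A top B).hom ≫ ((dAnd A).hom ∧ₘ 𝟙 B) = 𝟙 A ∧ₘ (sAnd B).hom :=
  Quotient.sound (.triangleAnd A B)

theorem cOr_comp_dOr (A : Frm) : (cOr bot A).hom ≫ (dOr A).hom = (sOr A).hom :=
  (Quotient.sound (MEq.sigmaOr_c A)).symm

theorem cAnd_comp_dAnd (A : Frm) : (cAnd top A).hom ≫ (dAnd A).hom = (sAnd A).hom :=
  (Quotient.sound (MEq.sigmaAnd_c A)).symm

theorem cOr_comp_sOr (A : Frm) : (cOr A bot).hom ≫ (sOr A).hom = (dOr A).hom := by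
  rw [← cOr_comp_dOr, reassoc_of% cOr_comp_cOr]

theorem cAnd_comp_sAnd (A : Frm) : (cAnd A top).hom ≫ (sAnd A).hom = (dAnd A).hom := by
  rw [← cAnd_comp_dAnd, reassoc_of% cAnd_comp_cAnd]

theorem ck_cAnd (A B C D : Frm) :
    ck A B C D ≫ (cAnd (A.or C) (B.or D)).hom =
      ((cAnd A B).hom ∨ₘ (cAnd C D).hom) ≫ ck B A D C :=
  Quotient.sound (.diag3 A B C D)

theorem cOr_ck (A B C D : Frm) :
    (cOr (A.and C) (B.and D)).hom ≫ ck B D A C =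
      ck A C B D ≫ ((cOr A B).hom ∧ₘ (cOr C D).hom) :=
  Quotient.sound (.diag4 A B C D)

theorem ck_bot_bot (A B : Frm) :
    ck A B bot bot = (𝟙 _ ∨ₘ wAnd.hom) ≫ (dOr (A.and B)).hom ≫ ((dOr A).inv ∧ₘ (dOr B).inv) := by
  rw [← Category.assoc]; exact Quotient.sound (MEq.diag5 A B)

theorem ck_top_top (A B : Frm) :
    ck A top B top = ((dAnd A).hom ∨ₘ (dAnd B).hom) ≫ (dAnd (A.or B)).inv ≫ (𝟙 _ ∧ₘ wOr.inv) := by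
  rw [← Category.assoc]; exact Quotient.sound (MEq.diag6 A B)

theorem bOr_top_top_top :
    (bOr top top top).hom = (𝟙 top ∨ₘ wOr.hom) ≫ (wOr.inv ∨ₘ 𝟙 top) :=
  Quotient.sound .diag7

theorem bAnd_bot_bot_bot :
    (bAnd bot bot bot).hom = (𝟙 bot ∧ₘ wAnd.hom) ≫ (wAnd.inv ∧ₘ 𝟙 bot) :=
  Quotient.sound .diag8

theorem top_orHom_kappa : 𝟙 top ∨ₘ kappa = (dOr top).hom ≫ wOr.inv := Quotient.sound .diag9

theorem bot_andHom_kappa : 𝟙 bot ∧ₘ kappa = wAnd.hom ≫ (dAnd bot).inv := Quotient.sound .diag10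

theorem ck_top_bot_bot_top :
    ck top bot bot top = ((sAnd bot).hom ∨ₘ (dAnd bot).hom) ≫ (dOr bot).hom ≫ kappa ≫
      (dAnd top).inv ≫ ((dOr top).inv ∧ₘ (sOr top).inv) := by
  simp only [← Category.assoc]; exact Quotient.sound MEq.diag11

theorem cOr_top_top : (cOr top top).hom = wOr.hom ≫ wOr.inv := Quotient.sound .diag12

theorem cAnd_bot_bot : (cAnd bot bot).hom = wAnd.hom ≫ wAnd.inv := Quotient.sound .diag13

/-! ## Kelly's unit lemmas -/

/- Not instances: `∨` and `∧` are two monoidal structures on the same category, each activated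
locally to obtain Kelly's unit lemmas from Mathlib. -/
abbrev orMonoidal : MonoidalCategory Frm where
  tensorObj := Frm.or
  whiskerLeft X _ _ f := 𝟙 X ∨ₘ f
  whiskerRight f Y := f ∨ₘ 𝟙 Y
  tensorHom f g := f ∨ₘ g
  tensorUnit := bot
  associator X Y Z := (bOr X Y Z).symm
  leftUnitor := sOr
  rightUnitor := dOr
  tensorHom_def f g := by simp
  id_tensorHom_id := orHom_id
  tensorHom_comp_tensorHom := orHom_comp_orHom
  whiskerLeft_id := orHom_id
  id_whiskerRight := orHom_id
  associator_naturality f g h := by simp [Iso.comp_inv_eq, bOr_naturality]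
  leftUnitor_naturality := sOr_naturality
  rightUnitor_naturality := dOr_naturality
  pentagon W X Y Z := by
    have h := congrArg Iso.inv (Iso.ext (pentagon_or W X Y Z) :
      bOr W X (Y.or Z) ≪≫ bOr (W.or X) Y Z =
        orIso (Iso.refl W) (bOr X Y Z) ≪≫ bOr W (X.or Y) Z ≪≫ orIso (bOr W X Y) (Iso.refl Z))
    simpa using h.symm
  triangle X Y := by simp [← triangle_or]

abbrev andMonoidal : MonoidalCategory Frm where
  tensorObj := Frm.and
  whiskerLeft X _ _ f := 𝟙 X ∧ₘ f
  whiskerRight f Y := f ∧ₘ 𝟙 Y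
  tensorHom f g := f ∧ₘ g
  tensorUnit := top
  associator X Y Z := (bAnd X Y Z).symm
  leftUnitor := sAnd
  rightUnitor := dAnd
  tensorHom_def f g := by simp
  id_tensorHom_id := andHom_id
  tensorHom_comp_tensorHom := andHom_comp_andHom
  whiskerLeft_id := andHom_id
  id_whiskerRight := andHom_id
  associator_naturality f g h := by simp [Iso.comp_inv_eq, bAnd_naturality]
  leftUnitor_naturality := sAnd_naturality
  rightUnitor_naturality := dAnd_naturality
  pentagon W X Y Z := by
    have h := congrArg Iso.inv (Iso.ext (pentagon_and W X Y Z) :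
      bAnd W X (Y.and Z) ≪≫ bAnd (W.and X) Y Z =
        andIso (Iso.refl W) (bAnd X Y Z) ≪≫ bAnd W (X.and Y) Z ≪≫ andIso (bAnd W X Y) (Iso.refl Z))
    simpa using h.symm
  triangle X Y := by simp [← triangle_and]

theorem sOr_bot : sOr bot = dOr bot :=
  letI := orMonoidal; Iso.ext unitors_equal

theorem sAnd_top : sAnd top = dAnd top :=
  letI := andMonoidal; Iso.ext unitors_equal

theorem bOr_comp_dOr (A B : Frm) :
    (bOr A B bot).hom ≫ (dOr (A.or B)).hom = 𝟙 A ∨ₘ (dOr B).hom :=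
  letI := orMonoidal; (Iso.eq_inv_comp _).1 (rightUnitor_tensor_hom A B)

theorem bAnd_comp_dAnd (A B : Frm) :
    (bAnd A B top).hom ≫ (dAnd (A.and B)).hom = 𝟙 A ∧ₘ (dAnd B).hom :=
  letI := andMonoidal; (Iso.eq_inv_comp _).1 (rightUnitor_tensor_hom A B)

theorem bOr_comp_sOr (A B : Frm) :
    (bOr bot A B).hom ≫ ((sOr A).hom ∨ₘ 𝟙 B) = (sOr (A.or B)).hom :=
  letI := orMonoidal; (leftUnitor_tensor_hom A B).symm

theorem bAnd_comp_sAnd (A B : Frm) :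
    (bAnd top A B).hom ≫ ((sAnd A).hom ∧ₘ 𝟙 B) = (sAnd (A.and B)).hom :=
  letI := andMonoidal; (leftUnitor_tensor_hom A B).symm

/-! ## Truth values as objects -/

abbrev Frm.ofBool : Bool → Frm
  | false => bot
  | true => top

/- Reducible, like `ofBool`, so that after unfolding `normalize` the types `ofBool (A.or B).eval`
and `ofBool (A.eval || B.eval)` match in rewriting. The value at letters is arbitrary. -/
abbrev Frm.eval : Frm → Bool
  | .pl _ => true
  | .bot => false
  | .top => true
  | .or A B => A.eval || B.eval
  | .and A B => A.eval && B.eval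

open SMI.Frm (ofBool)

def orBool : ∀ a b : Bool, (ofBool a).or (ofBool b) ≅ ofBool (a || b)
  | false, false => dOr bot
  | false, true => sOr top
  | true, false => dOr top
  | true, true => wOr

def andBool : ∀ a b : Bool, (ofBool a).and (ofBool b) ≅ ofBool (a && b)
  | false, false => wAnd
  | false, true => dAnd bot
  | true, false => sAnd bot
  | true, true => dAnd top

def boolHom : ∀ a b : Bool, a ≤ b → (ofBool a ⟶ ofBool b)
  | false, false, _ => 𝟙 _
  | false, true, _ => kappa
  | true, true, _ => 𝟙 _
  | true, false, h => absurd h (by decide)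

@[simp] theorem boolHom_false_true (h : false ≤ true) : boolHom false true h = kappa := rfl

@[simp] theorem boolHom_self (a : Bool) (h : a ≤ a) : boolHom a a h = 𝟙 _ := by
  cases a <;> rfl

theorem boolHom_comp_boolHom {a b c : Bool} (h : a ≤ b) (h' : b ≤ c) :
    boolHom a b h ≫ boolHom b c h' = boolHom a c (h.trans h') := by
  cases a <;> cases b <;> cases c <;>
    first | exact absurd h (by decide) | exact absurd h' (by decide) | simp

theorem top_orHom_kappa_comp_wOr : (𝟙 top ∨ₘ kappa) ≫ wOr.hom = (dOr top).hom := by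
  simp [top_orHom_kappa]

theorem kappa_orHom_top_comp_wOr : (kappa ∨ₘ 𝟙 top) ≫ wOr.hom = (sOr top).hom := by
  rw [← cancel_epi (cOr top bot).hom, cOr_comp_sOr, ← reassoc_of% cOr_naturality,
    cOr_top_top]
  simp [top_orHom_kappa_comp_wOr]

theorem kappa_orHom_kappa_comp_wOr : (kappa ∨ₘ kappa) ≫ wOr.hom = (dOr bot).hom ≫ kappa := by
  rw [← dOr_naturality, ← top_orHom_kappa_comp_wOr, ← Category.assoc, orHom_comp_orHom,
    Category.id_comp, Category.comp_id]

theorem bot_andHom_kappa_comp_dAnd : (𝟙 bot ∧ₘ kappa) ≫ (dAnd bot).hom = wAnd.hom := by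
  simp [bot_andHom_kappa]

theorem kappa_andHom_bot_comp_sAnd : (kappa ∧ₘ 𝟙 bot) ≫ (sAnd bot).hom = wAnd.hom := by
  rw [← cancel_epi (cAnd bot bot).hom, ← reassoc_of% cAnd_naturality, ← cAnd_comp_dAnd,
    reassoc_of% cAnd_comp_cAnd, bot_andHom_kappa_comp_dAnd, cAnd_bot_bot]
  simp

theorem kappa_andHom_kappa_comp_dAnd : (kappa ∧ₘ kappa) ≫ (dAnd top).hom = wAnd.hom ≫ kappa := by
  rw [← bot_andHom_kappa_comp_dAnd, Category.assoc, ← dAnd_naturality, ← Category.assoc,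
    andHom_comp_andHom, Category.id_comp, Category.comp_id]

theorem top_andHom_kappa_comp_dAnd :
    (𝟙 top ∧ₘ kappa) ≫ (dAnd top).hom = (sAnd bot).hom ≫ kappa := by
  rw [← sAnd_top, sAnd_naturality]

/- In the case analyses below, `dsimp only [or]` evaluates the Boolean arguments of `boolHom`,
which `simp` cannot rewrite because the proof argument depends on them. -/
theorem orHom_boolHom {a₁ b₁ a₂ b₂ : Bool} (h₁ : a₁ ≤ b₁) (h₂ : a₂ ≤ b₂)
    (h : (a₁ || a₂) ≤ (b₁ || b₂)) :
    (boolHom a₁ b₁ h₁ ∨ₘ boolHom a₂ b₂ h₂) ≫ (orBool b₁ b₂).hom =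
      (orBool a₁ a₂).hom ≫ boolHom _ _ h := by
  cases a₁ <;> cases b₁ <;> cases a₂ <;> cases b₂ <;>
    first | exact absurd h₁ (by decide) | exact absurd h₂ (by decide) | dsimp only [or]
  all_goals simp [orBool, dOr_naturality, sOr_naturality, sOr_bot, top_orHom_kappa_comp_wOr,
    kappa_orHom_top_comp_wOr, kappa_orHom_kappa_comp_wOr]

theorem andHom_boolHom {a₁ b₁ a₂ b₂ : Bool} (h₁ : a₁ ≤ b₁) (h₂ : a₂ ≤ b₂)
    (h : (a₁ && a₂) ≤ (b₁ && b₂)) :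
    (boolHom a₁ b₁ h₁ ∧ₘ boolHom a₂ b₂ h₂) ≫ (andBool b₁ b₂).hom =
      (andBool a₁ a₂).hom ≫ boolHom _ _ h := by
  cases a₁ <;> cases b₁ <;> cases a₂ <;> cases b₂ <;>
    first | exact absurd h₁ (by decide) | exact absurd h₂ (by decide) | dsimp only [and]
  all_goals simp [andBool, dAnd_naturality, bot_andHom_kappa_comp_dAnd, kappa_andHom_bot_comp_sAnd,
    top_andHom_kappa_comp_dAnd, kappa_andHom_kappa_comp_dAnd]

theorem cOr_orBool (a b : Bool) (h : (a || b) ≤ (b || a)) :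
    (cOr (ofBool a) (ofBool b)).hom ≫ (orBool b a).hom = (orBool a b).hom ≫ boolHom _ _ h := by
  cases a <;> cases b <;> dsimp only [or] <;>
    simp [orBool, cOr_comp_dOr, sOr_bot, cOr_top_top, cOr_comp_sOr]

theorem cAnd_andBool (a b : Bool) (h : (a && b) ≤ (b && a)) :
    (cAnd (ofBool a) (ofBool b)).hom ≫ (andBool b a).hom = (andBool a b).hom ≫ boolHom _ _ h := by
  cases a <;> cases b <;> dsimp only [and] <;>
    simp [andBool, cAnd_comp_dAnd, sAnd_top, cAnd_bot_bot, cAnd_comp_sAnd]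

theorem bOr_orBool (a b c : Bool) (h : (a || (b || c)) ≤ ((a || b) || c)) :
    (bOr _ _ _).hom ≫ ((orBool a b).hom ∨ₘ 𝟙 _) ≫ (orBool (a || b) c).hom =
      (𝟙 _ ∨ₘ (orBool b c).hom) ≫ (orBool a (b || c)).hom ≫ boolHom _ _ h := by
  cases a <;> cases b <;> cases c <;> dsimp only [or] <;>
    simp [orBool, reassoc_of% triangle_or, dOr_naturality, reassoc_of% bOr_comp_dOr,
      reassoc_of% bOr_comp_sOr, sOr_naturality, bOr_top_top_top, reassoc_of% orHom_comp_orHom]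

theorem bAnd_andBool (a b c : Bool) (h : (a && (b && c)) ≤ ((a && b) && c)) :
    (bAnd _ _ _).hom ≫ ((andBool a b).hom ∧ₘ 𝟙 _) ≫ (andBool (a && b) c).hom =
      (𝟙 _ ∧ₘ (andBool b c).hom) ≫ (andBool a (b && c)).hom ≫ boolHom _ _ h := by
  cases a <;> cases b <;> cases c <;> dsimp only [and] <;>
    simp [andBool, reassoc_of% triangle_and, dAnd_naturality, reassoc_of% bAnd_comp_dAnd,
      reassoc_of% bAnd_comp_sAnd, sAnd_naturality, bAnd_bot_bot_bot,
      reassoc_of% andHom_comp_andHom]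

theorem orBool_false (a : Bool) (h : (a || false) ≤ a) :
    (orBool a false).hom ≫ boolHom _ _ h = (dOr (ofBool a)).hom := by
  cases a <;> dsimp only [or] <;> simp [orBool]

theorem false_orBool (a : Bool) (h : (false || a) ≤ a) :
    (orBool false a).hom ≫ boolHom _ _ h = (sOr (ofBool a)).hom := by
  cases a <;> dsimp only [or] <;> simp [orBool, sOr_bot]

theorem andBool_true (a : Bool) (h : (a && true) ≤ a) :
    (andBool a true).hom ≫ boolHom _ _ h = (dAnd (ofBool a)).hom := by
  cases a <;> dsimp only [and] <;> simp [andBool]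

theorem true_andBool (a : Bool) (h : (true && a) ≤ a) :
    (andBool true a).hom ≫ boolHom _ _ h = (sAnd (ofBool a)).hom := by
  cases a <;> dsimp only [and] <;> simp [andBool, sAnd_top]

theorem ck_bot_bot_comp {A B C : Frm} (u : A.and B ⟶ C) :
    ck A B bot bot ≫ ((dOr A).hom ∧ₘ (dOr B).hom) ≫ u = (u ∨ₘ wAnd.hom) ≫ (dOr C).hom := by
  simp only [ck_bot_bot, Category.assoc, reassoc_of% andHom_comp_andHom, Iso.inv_hom_id, andHom_id,
    Category.id_comp]
  rw [← dOr_naturality]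
  simp [reassoc_of% orHom_comp_orHom]

theorem ck_top_top_comp {A B C : Frm} (u : A.or B ⟶ C) :
    ck A top B top ≫ (u ∧ₘ wOr.hom) ≫ (dAnd C).hom = ((dAnd A).hom ∨ₘ (dAnd B).hom) ≫ u := by
  rw [ck_top_top]
  simp [reassoc_of% andHom_comp_andHom, dAnd_naturality]

theorem and_or_and_le (a b c d : Bool) : ((a && b) || (c && d)) ≤ ((a || c) && (b || d)) := by
  cases a <;> cases b <;> cases c <;> cases d <;> decide

def CkCoherent (a b c d : Bool) : Prop :=
  ck (ofBool a) (ofBool b) (ofBool c) (ofBool d) ≫ ((orBool a c).hom ∧ₘ (orBool b d).hom) ≫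
      (andBool (a || c) (b || d)).hom =
    ((andBool a b).hom ∨ₘ (andBool c d).hom) ≫ (orBool (a && b) (c && d)).hom ≫
      boolHom _ _ (and_or_and_le a b c d)

theorem CkCoherent.swap_or {a b c d : Bool} (H : CkCoherent a b c d) : CkCoherent c d a b := by
  have hck : ck (ofBool c) (ofBool d) (ofBool a) (ofBool b) =
      (cOr _ _).hom ≫ ck _ _ _ _ ≫
        ((cOr (ofBool a) (ofBool c)).hom ∧ₘ (cOr (ofBool b) (ofBool d)).hom) := by
    rw [← cOr_ck, reassoc_of% cOr_comp_cOr]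
  rw [CkCoherent, hck, Category.assoc, Category.assoc, reassoc_of% andHom_comp_andHom,
    cOr_orBool a c (Bool.or_comm a c).le, cOr_orBool b d (Bool.or_comm b d).le,
    ← reassoc_of% andHom_comp_andHom,
    andHom_boolHom _ _ (by rw [Bool.or_comm a, Bool.or_comm b]), reassoc_of% H,
    ← reassoc_of% cOr_naturality, reassoc_of% cOr_orBool _ _ (Bool.or_comm _ _).le,
    boolHom_comp_boolHom, boolHom_comp_boolHom]

theorem CkCoherent.swap_and {a b c d : Bool} (H : CkCoherent a b c d) : CkCoherent b a d c := by
  have hck : ck (ofBool b) (ofBool a) (ofBool d) (ofBool c) =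
      ((cAnd _ _).hom ∨ₘ (cAnd _ _).hom) ≫ ck _ _ _ _ ≫
        (cAnd ((ofBool a).or (ofBool c)) _).hom := by
    rw [ck_cAnd, reassoc_of% orHom_comp_orHom, cAnd_comp_cAnd, cAnd_comp_cAnd, orHom_id,
      Category.id_comp]
  rw [CkCoherent, hck, Category.assoc, Category.assoc, ← reassoc_of% cAnd_naturality,
    cAnd_andBool _ _ (Bool.and_comm _ _).le, reassoc_of% H, reassoc_of% orHom_comp_orHom,
    cAnd_andBool b a (Bool.and_comm b a).le, cAnd_andBool d c (Bool.and_comm d c).le,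
    ← reassoc_of% orHom_comp_orHom,
    reassoc_of% orHom_boolHom _ _ (by rw [Bool.and_comm a, Bool.and_comm c]),
    boolHom_comp_boolHom, boolHom_comp_boolHom]

theorem ckCoherent_bot_bot (a b : Bool) : CkCoherent a b false false := by
  cases a <;> cases b <;> dsimp only [CkCoherent, or, and] <;>
    simp [orBool, andBool, ck_bot_bot_comp]

theorem ckCoherent_top_top (a c : Bool) : CkCoherent a true c true := by
  cases a <;> cases c <;> dsimp only [CkCoherent, or, and] <;>
    simp [orBool, andBool, ck_top_top_comp]

theorem ckCoherent_top_bot_bot_top : CkCoherent true false false true := by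
  dsimp only [CkCoherent, or, and]
  simp [orBool, andBool, ck_top_bot_bot_top, reassoc_of% andHom_comp_andHom]

theorem ckCoherent (a b c d : Bool) : CkCoherent a b c d := by
  cases a <;> cases b <;> cases c <;> cases d <;>
    first
    | exact ckCoherent_bot_bot _ _
    | exact (ckCoherent_bot_bot _ _).swap_or
    | exact ckCoherent_top_top _ _
    | exact (ckCoherent_top_top _ _).swap_and
    | exact ckCoherent_top_bot_bot_top
    | exact ckCoherent_top_bot_bot_top.swap_or

/-! ## Normalization of letterless formulas -/

def Tm.toHom {A B : Frm} : Tm A B → (A ⟶ B)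
  | .id A => 𝟙 A
  | .comp g f => f.toHom ≫ g.toHom
  | .orM f g => f.toHom ∨ₘ g.toHom
  | .andM f g => f.toHom ∧ₘ g.toHom
  | .bOrTo A B C => (bOr A B C).hom
  | .bOrFrom A B C => (bOr A B C).inv
  | .bAndTo A B C => (bAnd A B C).hom
  | .bAndFrom A B C => (bAnd A B C).inv
  | .cOr A B => (SMI.cOr A B).hom
  | .cAnd A B => (SMI.cAnd A B).hom
  | .dOrTo A => (dOr A).hom
  | .dOrFrom A => (dOr A).inv
  | .sOrTo A => (sOr A).hom
  | .sOrFrom A => (sOr A).inv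
  | .dAndTo A => (dAnd A).hom
  | .dAndFrom A => (dAnd A).inv
  | .sAndTo A => (sAnd A).hom
  | .sAndFrom A => (sAnd A).inv
  | .ck A B C D => SMI.ck A B C D
  | .wAndTo => wAnd.hom
  | .wAndFrom => wAnd.inv
  | .wOrTo => wOr.hom
  | .wOrFrom => wOr.inv
  | .kappa => SMI.kappa

theorem Tm.toHom_eq_mk {A B : Frm} (f : Tm A B) : f.toHom = ⟦f⟧ := by
  induction f with
  | comp g f ihg ihf => rw [toHom, ihf, ihg]; rfl
  | orM f g ihf ihg => rw [toHom, ihf, ihg]; rfl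
  | andM f g ihf ihg => rw [toHom, ihf, ihg]; rfl
  | _ => rfl

theorem Tm.eval_le {A B : Frm} (f : Tm A B) : A.eval ≤ B.eval := by
  induction f <;> simp only [Frm.eval, Bool.le_iff_imp] at * <;> grind

theorem Tm.noLtr_iff {A B : Frm} (f : Tm A B) : NoLtr A ↔ NoLtr B := by
  induction f <;> simp_all [NoLtr]
  all_goals tauto

def normalize : ∀ A : Frm, NoLtr A → (A ≅ ofBool A.eval)
  | .pl _, h => h.elim
  | .bot, _ => Iso.refl _
  | .top, _ => Iso.refl _
  | .or A B, h => orIso (normalize A h.1) (normalize B h.2) ≪≫ orBool _ _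
  | .and A B, h => andIso (normalize A h.1) (normalize B h.2) ≪≫ andBool _ _

def NormalizeSquare {A B : Frm} (f : A ⟶ B) (hA : NoLtr A) (hB : NoLtr B)
    (h : A.eval ≤ B.eval) : Prop :=
  f ≫ (normalize B hB).hom = (normalize A hA).hom ≫ boolHom _ _ h

theorem NormalizeSquare.inv {A B : Frm} {e : A ≅ B} {hA : NoLtr A} {hB : NoLtr B}
    {h : A.eval ≤ B.eval} (H : NormalizeSquare e.hom hA hB h) (h' : B.eval ≤ A.eval) :
    NormalizeSquare e.inv hB hA h' := by
  rw [NormalizeSquare, (Iso.eq_inv_comp e).2 H, Category.assoc, Category.assoc,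
    boolHom_comp_boolHom, boolHom_self, Category.comp_id]

theorem normalizeSquare_bOr (A B C : Frm) (hA : NoLtr (A.or (B.or C)))
    (hB : NoLtr ((A.or B).or C)) (h : (A.or (B.or C)).eval ≤ ((A.or B).or C).eval) :
    NormalizeSquare (bOr A B C).hom hA hB h := by
  simp only [NormalizeSquare, normalize, Iso.trans_hom, orIso_hom, comp_orHom, orHom_comp,
    Category.assoc]
  rw [← reassoc_of% bOr_naturality, bOr_orBool]

theorem normalizeSquare_bAnd (A B C : Frm) (hA : NoLtr (A.and (B.and C)))
    (hB : NoLtr ((A.and B).and C)) (h : (A.and (B.and C)).eval ≤ ((A.and B).and C).eval) :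
    NormalizeSquare (bAnd A B C).hom hA hB h := by
  simp only [NormalizeSquare, normalize, Iso.trans_hom, andIso_hom, comp_andHom, andHom_comp,
    Category.assoc]
  rw [← reassoc_of% bAnd_naturality, bAnd_andBool]

theorem normalizeSquare_cOr (A B : Frm) (hA : NoLtr (A.or B)) (hB : NoLtr (B.or A))
    (h : (A.or B).eval ≤ (B.or A).eval) : NormalizeSquare (cOr A B).hom hA hB h := by
  simp only [NormalizeSquare, normalize, Iso.trans_hom, orIso_hom, Category.assoc]
  rw [← reassoc_of% cOr_naturality, cOr_orBool _ _ h]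

theorem normalizeSquare_cAnd (A B : Frm) (hA : NoLtr (A.and B)) (hB : NoLtr (B.and A))
    (h : (A.and B).eval ≤ (B.and A).eval) : NormalizeSquare (cAnd A B).hom hA hB h := by
  simp only [NormalizeSquare, normalize, Iso.trans_hom, andIso_hom, Category.assoc]
  rw [← reassoc_of% cAnd_naturality, cAnd_andBool _ _ h]

theorem normalizeSquare_dOr (A : Frm) (hA : NoLtr (A.or bot)) (hB : NoLtr A)
    (h : (A.or bot).eval ≤ A.eval) : NormalizeSquare (dOr A).hom hA hB h := by
  simp only [NormalizeSquare, normalize, Iso.trans_hom, orIso_hom, Iso.refl_hom, Category.assoc]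
  rw [orBool_false, dOr_naturality]

theorem normalizeSquare_sOr (A : Frm) (hA : NoLtr (bot.or A)) (hB : NoLtr A)
    (h : (bot.or A).eval ≤ A.eval) : NormalizeSquare (sOr A).hom hA hB h := by
  simp only [NormalizeSquare, normalize, Iso.trans_hom, orIso_hom, Iso.refl_hom, Category.assoc]
  rw [false_orBool, sOr_naturality]

theorem normalizeSquare_dAnd (A : Frm) (hA : NoLtr (A.and top)) (hB : NoLtr A)
    (h : (A.and top).eval ≤ A.eval) : NormalizeSquare (dAnd A).hom hA hB h := by
  simp only [NormalizeSquare, normalize, Iso.trans_hom, andIso_hom, Iso.refl_hom, Category.assoc]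
  rw [andBool_true, dAnd_naturality]

theorem normalizeSquare_sAnd (A : Frm) (hA : NoLtr (top.and A)) (hB : NoLtr A)
    (h : (top.and A).eval ≤ A.eval) : NormalizeSquare (sAnd A).hom hA hB h := by
  simp only [NormalizeSquare, normalize, Iso.trans_hom, andIso_hom, Iso.refl_hom, Category.assoc]
  rw [true_andBool, sAnd_naturality]

theorem normalizeSquare_ck (A B C D : Frm) (hA : NoLtr ((A.and B).or (C.and D)))
    (hB : NoLtr ((A.or C).and (B.or D)))
    (h : ((A.and B).or (C.and D)).eval ≤ ((A.or C).and (B.or D)).eval) :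
    NormalizeSquare (ck A B C D) hA hB h := by
  simp only [NormalizeSquare, normalize, Iso.trans_hom, orIso_hom, andIso_hom,
    ← orHom_comp_orHom, ← andHom_comp_andHom, Category.assoc]
  rw [← reassoc_of% ck_naturality, ckCoherent]

theorem Tm.normalizeSquare_toHom {A B : Frm} (f : Tm A B) (hA : NoLtr A) (hB : NoLtr B) :
    NormalizeSquare f.toHom hA hB f.eval_le := by
  induction f with
  | id => simp [NormalizeSquare, toHom]
  | comp g f ihg ihf =>
    have hY := f.noLtr_iff.1 hA
    rw [NormalizeSquare, toHom, Category.assoc, ihg hY hB, reassoc_of% (ihf hA hY),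
      boolHom_comp_boolHom]
  | orM f g ihf ihg =>
    simp only [NormalizeSquare, toHom, normalize, Iso.trans_hom, orIso_hom, Category.assoc]
    rw [reassoc_of% orHom_comp_orHom, ihf hA.1 hB.1, ihg hA.2 hB.2,
      ← reassoc_of% orHom_comp_orHom, orHom_boolHom _ _ (f.orM g).eval_le]
  | andM f g ihf ihg =>
    simp only [NormalizeSquare, toHom, normalize, Iso.trans_hom, andIso_hom, Category.assoc]
    rw [reassoc_of% andHom_comp_andHom, ihf hA.1 hB.1, ihg hA.2 hB.2,
      ← reassoc_of% andHom_comp_andHom, andHom_boolHom _ _ (f.andM g).eval_le]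
  | bOrTo => exact normalizeSquare_bOr _ _ _ _ _ _
  | bOrFrom => exact (normalizeSquare_bOr _ _ _ _ _ (Tm.bOrTo _ _ _).eval_le).inv _
  | bAndTo => exact normalizeSquare_bAnd _ _ _ _ _ _
  | bAndFrom => exact (normalizeSquare_bAnd _ _ _ _ _ (Tm.bAndTo _ _ _).eval_le).inv _
  | cOr => exact normalizeSquare_cOr _ _ _ _ _
  | cAnd => exact normalizeSquare_cAnd _ _ _ _ _
  | dOrTo => exact normalizeSquare_dOr _ _ _ _
  | dOrFrom => exact (normalizeSquare_dOr _ _ _ (Tm.dOrTo _).eval_le).inv _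
  | sOrTo => exact normalizeSquare_sOr _ _ _ _
  | sOrFrom => exact (normalizeSquare_sOr _ _ _ (Tm.sOrTo _).eval_le).inv _
  | dAndTo => exact normalizeSquare_dAnd _ _ _ _
  | dAndFrom => exact (normalizeSquare_dAnd _ _ _ (Tm.dAndTo _).eval_le).inv _
  | sAndTo => exact normalizeSquare_sAnd _ _ _ _
  | sAndFrom => exact (normalizeSquare_sAnd _ _ _ (Tm.sAndTo _).eval_le).inv _
  | ck => exact normalizeSquare_ck _ _ _ _ _ _ _
  | wAndTo | wAndFrom | wOrTo | wOrFrom | kappa =>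
    dsimp only [NormalizeSquare, toHom, normalize, Frm.eval, or, and]
    simp [orBool, andBool]

theorem Tm.toHom_eq_canonical {A B : Frm} (f : Tm A B) (hA : NoLtr A) (hB : NoLtr B) :
    f.toHom = (normalize A hA).hom ≫ boolHom _ _ f.eval_le ≫ (normalize B hB).inv := by
  rw [← Category.assoc, Iso.eq_comp_inv]
  exact f.normalizeSquare_toHom hA hB

/-- Lemma 3.4 : in the free SMI category 𝓜 , if no letter occurs in `A`
and `B`, then any two arrows `f, g : A → B` are equal. -/
theorem letterless_coherence {A B : Frm} (hA : NoLtr A) (hB : NoLtr B)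
    (f g : Tm A B) : MEq f g := by
  have h : (⟦f⟧ : A ⟶ B) = ⟦g⟧ := by
    rw [← f.toHom_eq_mk, ← g.toHom_eq_mk, f.toHom_eq_canonical hA hB, g.toHom_eq_canonical hA hB]
  exact Quotient.exact h

end SMI
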